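/- arXiv:2306.03339 — 4 statements merged into one kernel-verified Lean document; each statement's English description precedes it below -/
import Mathlib

section
/- For all real $x \ge 1$ and $y \ge 2$, $\Phi(x,y) \le x \prod_{p \le y}(1 - 1/p) + 2^{\pi(y)-1}$, where the product is over primes $p \le y$ and $\pi(y)$ is the number of primes $\le y$. -/
open Finset
open scoped Classical

/-- `Phi x y` is the number of integers `n ∈ [1, x]` having no prime factor `≤ y`. -/
noncomputable def Phi (x y : ℝ) : ℕ :=
  ((Finset.Icc 1 ⌊x⌋₊).filter (fun n => ∀ p : ℕ, p.Prime → p ∣ n → y < (p : ℝ))).card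

/-- `primePi x` is the number of primes `≤ x`. -/
noncomputable def primePi (x : ℝ) : ℕ := ((Finset.Iic ⌊x⌋₊).filter Nat.Prime).card

private lemma prod_neg_aux (s : Finset ℕ) (f : ℕ → ℝ) :
    ∏ i ∈ s, (-f i) = (-1) ^ s.card * ∏ i ∈ s, f i := by
  classical
  induction s using Finset.induction with
  | empty => simp
  | insert _ _ h ih =>
      rw [Finset.prod_insert h, Finset.prod_insert h, ih,
        Finset.card_insert_of_notMem h, pow_succ]; ring

private lemma incl_excl (P : Finset ℕ) (hP : ∀ p ∈ P, p.Prime) (N : ℕ) :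
    (((Finset.Icc 1 N).filter fun n => ∀ p ∈ P, ¬ p ∣ n).card : ℤ) =
      ∑ S ∈ P.powerset, (-1) ^ S.card * ((N / ∏ p ∈ S, p : ℕ) : ℤ) := by
  classical
  have key : ∀ S : Finset ℕ, ((N / ∏ p ∈ S, p : ℕ) : ℤ) =
      ∑ n ∈ Finset.Icc 1 N, if (∏ p ∈ S, p) ∣ n then (1 : ℤ) else 0 := by
    intro S
    have h1 : Finset.Icc 1 N = Finset.Ioc 0 N := Finset.Icc_add_one_left_eq_Ioc 0 N
    rw [h1, ← Nat.Ioc_filter_dvd_card_eq_div N (∏ p ∈ S, p), Finset.card_filter]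
    push_cast
    rfl
  have inner : ∀ n : ℕ,
      (∑ S ∈ P.powerset, (-1 : ℤ) ^ S.card * (if (∏ p ∈ S, p) ∣ n then (1 : ℤ) else 0)) =
        if (∀ p ∈ P, ¬ p ∣ n) then 1 else 0 := by
    intro n
    have h2 : ∀ S ∈ P.powerset,
        (-1 : ℤ) ^ S.card * (if (∏ p ∈ S, p) ∣ n then (1 : ℤ) else 0) =
          if (∏ p ∈ S, p) ∣ n then (-1 : ℤ) ^ S.card else 0 := by
      intro S _; rw [mul_ite, mul_one, mul_zero]
    rw [Finset.sum_congr rfl h2, ← Finset.sum_filter]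
    have h3 : P.powerset.filter (fun S => (∏ p ∈ S, p) ∣ n) =
        (P.filter (· ∣ n)).powerset := by
      ext S
      simp only [Finset.mem_filter, Finset.mem_powerset]
      constructor
      · rintro ⟨hSP, hdvd⟩ p hpS
        exact Finset.mem_filter.2 ⟨hSP hpS, dvd_trans (Finset.dvd_prod_of_mem _ hpS) hdvd⟩
      · intro hSD
        have hSP : S ⊆ P := fun p hp => (Finset.mem_filter.1 (hSD hp)).1
        refine ⟨hSP, Finset.prod_primes_dvd n (fun p hp => (hP p (hSP hp)).prime)
          (fun p hp => (Finset.mem_filter.1 (hSD hp)).2)⟩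
    rw [h3, Finset.sum_powerset_neg_one_pow_card]
    congr 1
    simp [Finset.filter_eq_empty_iff, eq_iff_iff]
  have lhs : (((Finset.Icc 1 N).filter fun n => ∀ p ∈ P, ¬ p ∣ n).card : ℤ) =
      ∑ n ∈ Finset.Icc 1 N, if (∀ p ∈ P, ¬ p ∣ n) then (1 : ℤ) else 0 := by
    rw [Finset.card_filter]; push_cast; rfl
  rw [lhs]
  have hsw : (∑ S ∈ P.powerset, (-1 : ℤ) ^ S.card * ((N / ∏ p ∈ S, p : ℕ) : ℤ)) =
      ∑ S ∈ P.powerset, ∑ n ∈ Finset.Icc 1 N,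
        (-1 : ℤ) ^ S.card * (if (∏ p ∈ S, p) ∣ n then (1 : ℤ) else 0) :=
    Finset.sum_congr rfl fun S _ => by rw [key S, Finset.mul_sum]
  rw [hsw, Finset.sum_comm]
  exact (Finset.sum_congr rfl fun n _ => inner n).symm

theorem phi_le_mertens_plus_pow (x y : ℝ) (hx : 1 ≤ x) (hy : 2 ≤ y) :
    (Phi x y : ℝ) ≤
      x * ∏ p ∈ (Finset.Iic ⌊y⌋₊).filter Nat.Prime, (1 - 1 / (p : ℝ)) +
        2 ^ (primePi y - 1) := by
  classical
  set N := ⌊x⌋₊ with hN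
  set P := (Finset.Iic ⌊y⌋₊).filter Nat.Prime with hPdef
  have hP : ∀ p ∈ P, p.Prime := fun p hp => (Finset.mem_filter.1 hp).2
  have hy0 : (0 : ℝ) ≤ y := le_trans (by norm_num) hy
  -- 2 ∈ P
  have h2P : 2 ∈ P := by
    refine Finset.mem_filter.2 ⟨Finset.mem_Iic.2 ?_, Nat.prime_two⟩
    exact Nat.le_floor (by exact_mod_cast hy)
  have hPne : P ≠ ∅ := Finset.ne_empty_of_mem h2P
  have hcard : 1 ≤ P.card := Finset.card_pos.2 ⟨2, h2P⟩
  -- step 1 : Phi as no-small-prime count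
  have step1 : Phi x y =
      ((Finset.Icc 1 N).filter fun n => ∀ p ∈ P, ¬ p ∣ n).card := by
    unfold Phi
    congr 1
    apply Finset.filter_congr
    intro n _
    constructor
    · intro h p hp hpn
      have hprime := (Finset.mem_filter.1 hp).2
      have hple : (p : ℝ) ≤ y := by
        have := Finset.mem_Iic.1 (Finset.mem_filter.1 hp).1
        exact le_trans (Nat.cast_le.2 this) (Nat.floor_le hy0)
      exact absurd (h p hprime hpn) (not_lt.2 hple)
    · intro h p hprime hpn
      by_contra hcon
      push_neg at hcon
      have : p ∈ P := Finset.mem_filter.2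
        ⟨Finset.mem_Iic.2 (Nat.le_floor hcon), hprime⟩
      exact h p this hpn
  -- inclusion-exclusion, cast to ℝ
  have step2 : (Phi x y : ℝ) =
      ∑ S ∈ P.powerset, (-1 : ℝ) ^ S.card * ((N / ∏ p ∈ S, p : ℕ) : ℝ) := by
    have h := incl_excl P hP N
    rw [step1]
    calc ((((Finset.Icc 1 N).filter fun n => ∀ p ∈ P, ¬ p ∣ n).card : ℕ) : ℝ)
        = (((((Finset.Icc 1 N).filter fun n => ∀ p ∈ P, ¬ p ∣ n).card : ℕ) : ℤ) : ℝ) := by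
          norm_cast
      _ = (((∑ S ∈ P.powerset, (-1 : ℤ) ^ S.card * ((N / ∏ p ∈ S, p : ℕ) : ℤ) : ℤ)) : ℝ) := by
          rw [h]
      _ = ∑ S ∈ P.powerset, (-1 : ℝ) ^ S.card * ((N / ∏ p ∈ S, p : ℕ) : ℝ) := by
          rw [Int.cast_sum]
          refine Finset.sum_congr rfl fun S _ => ?_
          rw [Int.cast_mul, Int.cast_pow, Int.cast_neg, Int.cast_one, Int.cast_natCast]
  rw [step2]
  -- termwise bound
  have hterm : ∀ S ∈ P.powerset,
      (-1 : ℝ) ^ S.card * ((N / ∏ p ∈ S, p : ℕ) : ℝ) ≤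
        (-1 : ℝ) ^ S.card * (x / (∏ p ∈ S, (p : ℝ))) +
          (if Odd S.card then (1 : ℝ) else 0) := by
    intro S hS
    set d : ℕ := ∏ p ∈ S, p with hd
    have hdpos : 0 < d := Finset.prod_pos fun p hp =>
      (hP p (Finset.mem_powerset.1 hS hp)).pos
    have hdR : (0 : ℝ) < (d : ℝ) := by exact_mod_cast hdpos
    have hprodcast : (∏ p ∈ S, (p : ℝ)) = (d : ℝ) := by
      rw [hd]; push_cast; rfl
    have hNx : (N : ℝ) ≤ x := Nat.floor_le (le_trans zero_le_one hx)
    have hub : ((N / d : ℕ) : ℝ) ≤ x / d := by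
      rw [le_div_iff₀ hdR]
      calc ((N / d : ℕ) : ℝ) * d = ((N / d * d : ℕ) : ℝ) := by push_cast; ring
        _ ≤ (N : ℝ) := by exact_mod_cast Nat.div_mul_le_self N d
        _ ≤ x := hNx
    have hlb : x / d < ((N / d : ℕ) : ℝ) + 1 := by
      rw [div_lt_iff₀ hdR]
      have hnat : N < (N / d + 1) * d := by
        calc N < d * (N / d) + d := by
              conv_lhs => rw [← Nat.div_add_mod N d]
              exact Nat.add_lt_add_left (Nat.mod_lt _ hdpos) _
          _ = (N / d + 1) * d := by ring
      calc x < (N : ℝ) + 1 := Nat.lt_floor_add_one x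
        _ ≤ ((N / d + 1 : ℕ) : ℝ) * d := by
            exact_mod_cast Nat.succ_le_of_lt hnat
        _ = (((N / d : ℕ) : ℝ) + 1) * d := by push_cast; ring
    rw [hprodcast]
    rcases Nat.even_or_odd S.card with he | ho
    · rw [he.neg_one_pow, if_neg (by simpa using he)]
      simpa using hub
    · rw [ho.neg_one_pow, if_pos ho]
      nlinarith [hlb]
  calc (∑ S ∈ P.powerset, (-1 : ℝ) ^ S.card * ((N / ∏ p ∈ S, p : ℕ) : ℝ))
      ≤ ∑ S ∈ P.powerset, ((-1 : ℝ) ^ S.card * (x / (∏ p ∈ S, (p : ℝ))) +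
          (if Odd S.card then (1 : ℝ) else 0)) := Finset.sum_le_sum hterm
    _ = x * ∏ p ∈ P, (1 - 1 / (p : ℝ)) + 2 ^ (primePi y - 1) := by
        rw [Finset.sum_add_distrib]
        congr 1
        · -- sum of signed reciprocals equals product
          have hprod : ∏ p ∈ P, (1 - 1 / (p : ℝ)) =
              ∑ S ∈ P.powerset, (-1 : ℝ) ^ S.card * (1 / ∏ p ∈ S, (p : ℝ)) := by
            have h1 : ∀ p ∈ P, (1 - 1 / (p : ℝ)) = (-(1 / (p : ℝ)) + 1) := by
              intro p _; ring
            rw [Finset.prod_congr rfl h1, Finset.prod_add]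
            refine Finset.sum_congr rfl fun S _ => ?_
            rw [Finset.prod_const_one, mul_one, prod_neg_aux]
            congr 1
            simp [one_div, Finset.prod_inv_distrib]
          rw [hprod, Finset.mul_sum]
          refine Finset.sum_congr rfl fun S _ => ?_
          ring
        · -- count of odd subsets
          have hsplit : (P.powerset.filter fun S => Odd S.card).card +
              (P.powerset.filter fun S => ¬ Odd S.card).card = 2 ^ P.card := by
            rw [Finset.card_filter_add_card_filter_not, Finset.card_powerset]
          have hzero : (∑ S ∈ P.powerset, (-1 : ℤ) ^ S.card) = 0 := by
            rw [Finset.sum_powerset_neg_one_pow_card, if_neg hPne]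
          have heq : ((P.powerset.filter fun S => ¬ Odd S.card).card : ℤ) =
              ((P.powerset.filter fun S => Odd S.card).card : ℤ) := by
            have := hzero
            rw [← Finset.sum_filter_add_sum_filter_not P.powerset
              (fun S => Odd S.card)] at this
            have hodd : (∑ S ∈ P.powerset.filter fun S => Odd S.card,
                (-1 : ℤ) ^ S.card) = -((P.powerset.filter fun S => Odd S.card).card : ℤ) := by
              rw [Finset.sum_congr rfl (fun S hS =>
                (Finset.mem_filter.1 hS).2.neg_one_pow)]
              simp [Finset.sum_const]
            have heven : (∑ S ∈ P.powerset.filter fun S => ¬ Odd S.card,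
                (-1 : ℤ) ^ S.card) = ((P.powerset.filter fun S => ¬ Odd S.card).card : ℤ) := by
              rw [Finset.sum_congr rfl (fun S hS =>
                (Nat.not_odd_iff_even.1 (Finset.mem_filter.1 hS).2).neg_one_pow)]
              simp [Finset.sum_const]
            rw [hodd, heven] at this
            linarith
          have heqn : (P.powerset.filter fun S => ¬ Odd S.card).card =
              (P.powerset.filter fun S => Odd S.card).card := by exact_mod_cast heq
          have hocard : (P.powerset.filter fun S => Odd S.card).card = 2 ^ (P.card - 1) := by
            have h2 : 2 * (P.powerset.filter fun S => Odd S.card).card = 2 ^ P.card := by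
              omega
            have hp2 : (2 : ℕ) ^ P.card = 2 * 2 ^ (P.card - 1) := by
              rw [← pow_succ']
              congr 1
              omega
            omega
          have hpi : primePi y = P.card := rfl
          rw [Finset.sum_ite, Finset.sum_const, Finset.sum_const_zero, add_zero,
            nsmul_eq_mul, mul_one, hpi, hocard]
          push_cast
          ring
end

section
/- For all real $x \ge 1$ and $y \ge 2$ with $y^2 \le x < y^3$: $\Phi(x,y) = \pi(x) - \pi(y) + 1 + \sum_{y < p \le \sqrt{x}} (\pi(x/p) - \pi(p) + 1)$, where the sum is over primes $p$ with $y < p \le \sqrt{x}$. -/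
open Finset
open scoped Classical

lemma primePi_split (x y : ℝ) (hy : 0 ≤ y) (hxy : y ≤ x) :
    primePi x = primePi y + ((Finset.Ioc ⌊y⌋₊ ⌊x⌋₊).filter Nat.Prime).card := by
  have h : ⌊y⌋₊ ≤ ⌊x⌋₊ := Nat.floor_le_floor hxy
  have hsplit : Finset.Iic ⌊x⌋₊ = Finset.Iic ⌊y⌋₊ ∪ Finset.Ioc ⌊y⌋₊ ⌊x⌋₊ := by
    ext n; simp only [Finset.mem_Iic, Finset.mem_union, Finset.mem_Ioc]; omega
  rw [primePi, primePi, hsplit, Finset.filter_union, Finset.card_union_of_disjoint]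
  refine Finset.disjoint_filter_filter ?_
  rw [Finset.disjoint_left]
  intro n hn hn'
  simp only [Finset.mem_Iic] at hn
  simp only [Finset.mem_Ioc] at hn'
  omega

lemma minFac_mul_eq {p q : ℕ} (hp : p.Prime) (hq : q.Prime) (hpq : p ≤ q) :
    (p * q).minFac = p := by
  have h2 : p * q ≠ 1 := by
    have := hp.two_le; have := hq.two_le; nlinarith
  have hd := Nat.minFac_dvd (p * q)
  have hpr := Nat.minFac_prime h2
  have hle : (p * q).minFac ≤ p :=
    Nat.minFac_le_of_dvd hp.two_le ⟨q, rfl⟩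
  rcases (Nat.Prime.dvd_mul hpr).mp hd with h | h
  · exact (Nat.prime_dvd_prime_iff_eq hpr hp).mp h
  · have := (Nat.prime_dvd_prime_iff_eq hpr hq).mp h
    omega

theorem phi_eq_buchstab_two_three (x y : ℝ) (hx : 1 ≤ x) (hy : 2 ≤ y)
    (h1 : y ^ 2 ≤ x) (h2 : x < y ^ 3) :
    (Phi x y : ℤ) = primePi x - primePi y + 1 +
      ∑ p ∈ (Finset.Iic ⌊Real.sqrt x⌋₊).filter
          (fun p : ℕ => Nat.Prime p ∧ y < (p : ℝ) ∧ (p : ℝ) ≤ Real.sqrt x),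
        ((primePi (x / p) : ℤ) - primePi p + 1) := by
  have hx0 : (0:ℝ) ≤ x := by linarith
  have hy0 : (0:ℝ) < y := by linarith
  have hyx : y ≤ x := by nlinarith
  set m := ⌊x⌋₊ with hm
  have hm1 : 1 ≤ m := Nat.le_floor (by exact_mod_cast hx)
  have hmx : (m : ℝ) ≤ x := Nat.floor_le hx0
  set S := (Finset.Iic ⌊Real.sqrt x⌋₊).filter
      (fun p : ℕ => Nat.Prime p ∧ y < (p : ℝ) ∧ (p : ℝ) ≤ Real.sqrt x) with hS
  set A := ((Finset.Icc 1 m).filter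
      (fun n => ∀ p : ℕ, p.Prime → p ∣ n → y < (p : ℝ))) with hA
  set P := (Finset.Ioc ⌊y⌋₊ m).filter Nat.Prime with hP
  set Q : ℕ → Finset ℕ := fun p => (Finset.Icc p ⌊x / p⌋₊).filter Nat.Prime with hQ
  set T := S.biUnion (fun p => (Q p).image (p * ·)) with hT
  -- facts about members of S
  have hSmem : ∀ p ∈ S, p.Prime ∧ y < (p:ℝ) ∧ (p:ℝ) ≤ Real.sqrt x := by
    intro p hp
    simp only [hS, Finset.mem_filter] at hp
    exact hp.2
  have hSsq : ∀ p ∈ S, ((p:ℝ))^2 ≤ x := by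
    intro p hp
    obtain ⟨hpp, hyp, hps⟩ := hSmem p hp
    calc ((p:ℝ))^2 ≤ (Real.sqrt x)^2 := by
          apply pow_le_pow_left₀ (by positivity) hps _
      _ = x := Real.sq_sqrt hx0
  have hSle : ∀ p ∈ S, (p:ℝ) ≤ x / p := by
    intro p hp
    obtain ⟨hpp, hyp, hps⟩ := hSmem p hp
    have hp0 : (0:ℝ) < p := by exact_mod_cast hpp.pos
    rw [le_div_iff₀ hp0]
    have := hSsq p hp; nlinarith
  -- members of T are semiprimes
  have hTmem : ∀ n ∈ T, ∃ p q : ℕ, p.Prime ∧ q.Prime ∧ p ≤ q ∧ y < (p:ℝ) ∧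
      (q:ℝ) ≤ x / p ∧ n = p * q := by
    intro n hn
    simp only [hT, Finset.mem_biUnion] at hn
    obtain ⟨p, hpS, hn⟩ := hn
    simp only [Finset.mem_image, hQ, Finset.mem_filter, Finset.mem_Icc] at hn
    obtain ⟨q, ⟨⟨hpq, hqx⟩, hqp⟩, rfl⟩ := hn
    obtain ⟨hpp, hyp, hps⟩ := hSmem p hpS
    have hp0 : (0:ℝ) < p := by exact_mod_cast hpp.pos
    refine ⟨p, q, hpp, hqp, hpq, hyp, ?_, rfl⟩
    calc (q:ℝ) ≤ (⌊x / p⌋₊ : ℝ) := by exact_mod_cast hqx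
      _ ≤ x / p := Nat.floor_le (by positivity)
  -- A = insert 1 (P ∪ T)
  have hAeq : A = insert 1 (P ∪ T) := by
    ext n
    simp only [hA, Finset.mem_filter, Finset.mem_Icc, Finset.mem_insert, Finset.mem_union]
    constructor
    · rintro ⟨⟨hn1, hnm⟩, H⟩
      by_cases hone : n = 1
      · exact Or.inl hone
      right
      have hnx : (n:ℝ) ≤ x := le_trans (by exact_mod_cast hnm) hmx
      by_cases hnp : n.Prime
      · left
        rw [hP, Finset.mem_filter, Finset.mem_Ioc]
        exact ⟨⟨(Nat.floor_lt (by linarith)).mpr (H n hnp dvd_rfl), hnm⟩, hnp⟩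
      · right
        -- composite case
        have hp : n.minFac.Prime := Nat.minFac_prime hone
        obtain ⟨q, hnq⟩ : n.minFac ∣ n := Nat.minFac_dvd n
        have hq0 : q ≠ 0 := by rintro rfl; simp at hnq; omega
        have hq1 : q ≠ 1 := by rintro rfl; rw [mul_one] at hnq; exact hnp (hnq ▸ hp)
        have hqdvd : q ∣ n := Dvd.intro_left _ hnq.symm
        have hpq : n.minFac ≤ q := Nat.minFac_le_of_dvd (by omega) hqdvd
        have hyp : y < (n.minFac : ℝ) := H _ hp (Nat.minFac_dvd n)
        by_cases hqp : q.Prime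
        · -- n = minFac * q with q prime
          have hyq : y < (q:ℝ) := H _ hqp hqdvd
          have hqx : (n.minFac : ℝ) * q ≤ x := by
            calc ((n.minFac : ℝ)) * q = (n:ℝ) := by exact_mod_cast hnq.symm
              _ ≤ x := hnx
          have hp0 : (0:ℝ) < n.minFac := by exact_mod_cast hp.pos
          have hpsx : (n.minFac : ℝ) ≤ Real.sqrt x := by
            rw [Real.le_sqrt (by positivity) hx0]
            have : ((n.minFac:ℝ)) ≤ q := by exact_mod_cast hpq
            nlinarith
          simp only [hT, Finset.mem_biUnion]
          refine ⟨n.minFac, ?_, ?_⟩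
          · rw [hS, Finset.mem_filter, Finset.mem_Iic]
            exact ⟨Nat.le_floor (by exact_mod_cast hpsx), hp, hyp, hpsx⟩
          · simp only [Finset.mem_image, hQ, Finset.mem_filter, Finset.mem_Icc]
            refine ⟨q, ⟨⟨hpq, Nat.le_floor ?_⟩, hqp⟩, hnq.symm⟩
            rw [le_div_iff₀ hp0]
            nlinarith [hqx]
        · -- q composite : contradiction
          exfalso
          have hr : q.minFac.Prime := Nat.minFac_prime hq1
          obtain ⟨s, hqs⟩ : q.minFac ∣ q := Nat.minFac_dvd q
          have hs0 : s ≠ 0 := by rintro rfl; simp at hqs; exact hq0 hqs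
          have hs1 : s ≠ 1 := by
            rintro rfl; rw [mul_one] at hqs; exact hqp (hqs ▸ hr)
          have hsq : s ∣ q := Dvd.intro_left _ hqs.symm
          have hsdvd : s ∣ n := dvd_trans hsq hqdvd
          have ht : s.minFac.Prime := Nat.minFac_prime hs1
          have hts : s.minFac ≤ s := Nat.minFac_le (by omega)
          have hyt : y < (s.minFac : ℝ) :=
            H _ ht (dvd_trans (Nat.minFac_dvd s) hsdvd)
          have hyr : y < (q.minFac : ℝ) :=
            H _ hr (dvd_trans ⟨s, hqs⟩ hqdvd)
          have hys : y < (s:ℝ) := lt_of_lt_of_le hyt (by exact_mod_cast hts)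
          have hnn : n = n.minFac * (q.minFac * s) := by
            conv_lhs => rw [hnq, hqs]
          have hnval : (n:ℝ) = (n.minFac:ℝ) * ((q.minFac:ℝ) * s) := by
            exact_mod_cast hnn
          have h3 : y * y < (q.minFac:ℝ) * s :=
            mul_lt_mul'' hyr hys hy0.le hy0.le
          have h4 : y * (y * y) < (n.minFac:ℝ) * ((q.minFac:ℝ) * s) :=
            mul_lt_mul'' hyp h3 hy0.le (by positivity)
          nlinarith [h4, hnval, hnx]
    · rintro (rfl | hPn | hTn)
      · refine ⟨⟨le_rfl, hm1⟩, ?_⟩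
        intro p hp hdvd
        exact absurd (Nat.dvd_one.mp hdvd) hp.ne_one
      · rw [hP, Finset.mem_filter, Finset.mem_Ioc] at hPn
        obtain ⟨⟨hyn, hnm⟩, hnp⟩ := hPn
        refine ⟨⟨hnp.one_lt.le, hnm⟩, ?_⟩
        intro p hp hdvd
        rcases (Nat.Prime.eq_one_or_self_of_dvd hnp p hdvd) with h | h
        · exact absurd h hp.one_lt.ne'
        · rw [h]; exact (Nat.floor_lt (by linarith)).mp hyn
      · obtain ⟨p, q, hpp, hqp, hpq, hyp, hqx, rfl⟩ := hTmem _ hTn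
        have hp0 : (0:ℝ) < p := by exact_mod_cast hpp.pos
        have hpqx : ((p * q : ℕ) : ℝ) ≤ x := by
          push_cast
          rw [le_div_iff₀ hp0] at hqx
          linarith [hqx]
        refine ⟨⟨by nlinarith [hpp.two_le, hqp.two_le], Nat.le_floor hpqx⟩, ?_⟩
        intro r hr hdvd
        rcases (Nat.Prime.dvd_mul hr).mp hdvd with h | h
        · rw [(Nat.prime_dvd_prime_iff_eq hr hpp).mp h]; exact hyp
        · rw [(Nat.prime_dvd_prime_iff_eq hr hqp).mp h]
          exact lt_of_lt_of_le hyp (by exact_mod_cast hpq)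
  -- 1 ∉ P ∪ T
  have h1PT : (1:ℕ) ∉ P ∪ T := by
    rw [Finset.mem_union]
    rintro (h | h)
    · rw [hP, Finset.mem_filter] at h
      exact Nat.not_prime_one h.2
    · obtain ⟨p, q, hpp, hqp, _, _, _, h1⟩ := hTmem _ h
      have := hpp.two_le; have := hqp.two_le
      nlinarith
  -- Disjoint P T
  have hDPT : Disjoint P T := by
    rw [Finset.disjoint_left]
    intro n hn hn'
    rw [hP, Finset.mem_filter] at hn
    obtain ⟨p, q, hpp, hqp, _, _, _, rfl⟩ := hTmem _ hn'
    exact Nat.not_prime_mul hpp.ne_one hqp.ne_one hn.2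
  -- card T
  have hcardT : T.card = ∑ p ∈ S, (Q p).card := by
    rw [hT, Finset.card_biUnion]
    · refine Finset.sum_congr rfl (fun p hp => ?_)
      apply Finset.card_image_of_injective
      intro a b hab
      exact Nat.eq_of_mul_eq_mul_left (hSmem p hp).1.pos hab
    · intro p hp p' hp' hne
      rw [Function.onFun, Finset.disjoint_left]
      intro n hn hn'
      simp only [Finset.mem_image, hQ, Finset.mem_filter, Finset.mem_Icc] at hn hn'
      obtain ⟨q, ⟨⟨hpq, _⟩, hq⟩, rfl⟩ := hn
      obtain ⟨q', ⟨⟨hpq', _⟩, hq'⟩, heq⟩ := hn'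
      have e1 : (p * q).minFac = p := minFac_mul_eq (hSmem p hp).1 hq hpq
      have e2 : (p' * q').minFac = p' := minFac_mul_eq (hSmem p' hp').1 hq' hpq'
      rw [heq] at e2
      exact hne (e1.symm.trans e2)
  -- card A
  have hcardA : A.card = 1 + P.card + T.card := by
    rw [hAeq, Finset.card_insert_of_notMem h1PT, Finset.card_union_of_disjoint hDPT]
    ring
  -- card P
  have hcardP : primePi x = primePi y + P.card := primePi_split x y (by linarith) hyx
  -- card Q
  have hcardQ : ∀ p ∈ S, ((Q p).card : ℤ) = (primePi (x / p) : ℤ) - primePi p + 1 := by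
    intro p hp
    obtain ⟨hpp, hyp, hps⟩ := hSmem p hp
    have hple : (p:ℝ) ≤ x / p := hSle p hp
    have hpfloor : p ≤ ⌊x / p⌋₊ := Nat.le_floor hple
    have hsplit := primePi_split (x / p) p (by positivity) hple
    have hIcc : Q p = insert p ((Finset.Ioc p ⌊x/p⌋₊).filter Nat.Prime) := by
      rw [hQ]
      ext n
      simp only [Finset.mem_filter, Finset.mem_Icc, Finset.mem_insert, Finset.mem_Ioc]
      constructor
      · rintro ⟨⟨h1', h2'⟩, h3'⟩
        rcases eq_or_lt_of_le h1' with h | h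
        · exact Or.inl h.symm
        · exact Or.inr ⟨⟨h, h2'⟩, h3'⟩
      · rintro (rfl | ⟨⟨h1', h2'⟩, h3'⟩)
        · exact ⟨⟨le_rfl, hpfloor⟩, hpp⟩
        · exact ⟨⟨h1'.le, h2'⟩, h3'⟩
    have hnotmem : p ∉ (Finset.Ioc p ⌊x/p⌋₊).filter Nat.Prime := by
      simp [Finset.mem_filter, Finset.mem_Ioc]
    rw [hIcc, Finset.card_insert_of_notMem hnotmem]
    have hfloorp : ⌊(p:ℝ)⌋₊ = p := Nat.floor_natCast p
    rw [hfloorp] at hsplit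
    have : primePi ((p:ℝ)) = ((Finset.Iic p).filter Nat.Prime).card := by
      rw [primePi, hfloorp]
    omega
  -- conclusion
  have hPhi : Phi x y = A.card := rfl
  rw [hPhi, hcardA, hcardT]
  push_cast
  rw [Finset.sum_congr rfl hcardQ]
  have : (P.card : ℤ) = (primePi x : ℤ) - primePi y := by omega
  rw [this]
  ring
end

section
/- For real $x, y$ with $y \ge 2$ and $y^2 \le x < y^3$: $\Phi(x,y) = \pi(x) - M(x,y) + \sum_{y < p \le \sqrt{x}} \pi(x/p)$, where $M(x,y) = \frac{1}{2}\pi(\sqrt{x})^2 - \frac{1}{2}\pi(\sqrt{x}) - \frac{1}{2}\pi(y)^2 + \frac{3}{2}\pi(y) - 1$ and the sum is over primes $p$ with $y < p \le \sqrt{x}$. -/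
open Finset
open scoped Classical

lemma primePi_split_s14 (u v : ℝ) (hu : 0 ≤ u) (huv : u ≤ v) :
    primePi v = primePi u
      + ((Finset.Iic ⌊v⌋₊).filter (fun p : ℕ => p.Prime ∧ u < (p : ℝ))).card := by
  classical
  have h := Finset.card_filter_add_card_filter_not
    (s := (Finset.Iic ⌊v⌋₊).filter Nat.Prime) (p := fun p : ℕ => u < (p : ℝ))
  rw [Finset.filter_filter, Finset.filter_filter] at h
  have h2 : (Finset.Iic ⌊v⌋₊).filter (fun p : ℕ => p.Prime ∧ ¬ u < (p : ℝ))
      = (Finset.Iic ⌊u⌋₊).filter Nat.Prime := by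
    ext p
    simp only [Finset.mem_filter, Finset.mem_Iic, not_lt]
    constructor
    · rintro ⟨_, hp, hpu⟩
      exact ⟨Nat.le_floor hpu, hp⟩
    · rintro ⟨hpu, hp⟩
      have h3 : (p : ℝ) ≤ u := le_trans (Nat.cast_le.mpr hpu) (Nat.floor_le hu)
      exact ⟨Nat.le_floor (h3.trans huv), hp, h3⟩
  rw [h2] at h
  unfold primePi
  omega

lemma triangle (s : Finset ℕ) :
    2 * ∑ p ∈ s, ((s.filter (fun q => q ≤ p)).card) = s.card * (s.card + 1) := by
  classical
  induction s using Finset.induction_on_max with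
  | empty => simp
  | insert m s hm ih =>
    have hms : m ∉ s := fun h => lt_irrefl m (hm m h)
    have h1 : (insert m s).filter (fun q => q ≤ m) = insert m s :=
      Finset.filter_true_of_mem (fun q hq => by
        rcases Finset.mem_insert.mp hq with h | h
        · exact le_of_eq h
        · exact (hm q h).le)
    have h2 : ∀ p ∈ s, (insert m s).filter (fun q => q ≤ p) = s.filter (fun q => q ≤ p) := by
      intro p hp
      rw [Finset.filter_insert, if_neg (not_le.mpr (hm p hp))]
    rw [Finset.sum_insert hms, Finset.card_insert_of_notMem hms, h1,
      Finset.card_insert_of_notMem hms,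
      Finset.sum_congr rfl (fun p hp => by rw [h2 p hp]), Nat.mul_add, ih]
    ring

lemma omega_two {p q : ℕ} (hp : p.Prime) (hq : q.Prime) :
    (p * q).primeFactorsList.length = 2 := by
  have h := Nat.perm_primeFactorsList_mul hp.ne_zero hq.ne_zero
  rw [h.length_eq, List.length_append, Nat.primeFactorsList_prime hp,
    Nat.primeFactorsList_prime hq]
  rfl

lemma prime_of_omega_one {n : ℕ} (hn : n ≠ 0) (h : n.primeFactorsList.length = 1) :
    n.Prime := by
  obtain ⟨p, hp⟩ := List.length_eq_one_iff.mp h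
  have hprime : p.Prime := Nat.prime_of_mem_primeFactorsList (n := n) (by rw [hp]; simp)
  have hprod := Nat.prod_primeFactorsList hn
  rw [hp, List.prod_singleton] at hprod
  rwa [← hprod]

lemma mul_inj' {p q p' q' : ℕ} (hp : p.Prime) (hq : q.Prime) (hp' : p'.Prime) (hq' : q'.Prime)
    (hpq : p ≤ q) (hpq' : p' ≤ q') (h : p * q = p' * q') : p = p' ∧ q = q' := by
  have h1 : p = p' ∨ p = q' := by
    have hd : p ∣ p' * q' := h ▸ dvd_mul_right p q
    rcases (Nat.Prime.dvd_mul hp).mp hd with hd | hd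
    · exact Or.inl ((Nat.prime_dvd_prime_iff_eq hp hp').mp hd)
    · exact Or.inr ((Nat.prime_dvd_prime_iff_eq hp hq').mp hd)
  have h2 : p' = p ∨ p' = q := by
    have hd : p' ∣ p * q := h ▸ dvd_mul_right p' q'
    rcases (Nat.Prime.dvd_mul hp').mp hd with hd | hd
    · exact Or.inl ((Nat.prime_dvd_prime_iff_eq hp' hp).mp hd)
    · exact Or.inr ((Nat.prime_dvd_prime_iff_eq hp' hq).mp hd)
  have hpeq : p = p' := by omega
  subst hpeq
  exact ⟨rfl, Nat.eq_of_mul_eq_mul_left hp.pos h⟩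

theorem phi_eq_pi_sub_M (x y : ℝ) (hy : 2 ≤ y) (h1 : y ^ 2 ≤ x) (h2 : x < y ^ 3) :
    (Phi x y : ℝ) = (primePi x : ℝ)
      - ((1 / 2) * (primePi (Real.sqrt x) : ℝ) ^ 2
          - (1 / 2) * (primePi (Real.sqrt x) : ℝ)
          - (1 / 2) * (primePi y : ℝ) ^ 2 + (3 / 2) * (primePi y : ℝ) - 1)
      + ∑ p ∈ (Finset.Iic ⌊Real.sqrt x⌋₊).filter
          (fun p : ℕ => Nat.Prime p ∧ y < (p : ℝ) ∧ (p : ℝ) ≤ Real.sqrt x),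
          (primePi (x / p) : ℝ) := by
  classical
  have hy0 : (0:ℝ) ≤ y := by linarith
  have hx1 : (1:ℝ) ≤ x := by nlinarith
  have hx0 : (0:ℝ) ≤ x := by linarith
  have hsq0 : (0:ℝ) ≤ Real.sqrt x := Real.sqrt_nonneg x
  have hsqx : Real.sqrt x ^ 2 = x := Real.sq_sqrt hx0
  have hysx : y ≤ Real.sqrt x := Real.le_sqrt_of_sq_le h1
  have hsxx : Real.sqrt x ≤ x := by nlinarith [hsqx, hsq0]
  have hNx : ((⌊x⌋₊ : ℕ) : ℝ) ≤ x := Nat.floor_le hx0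
  have hN1 : 1 ≤ ⌊x⌋₊ := Nat.le_floor (by exact_mod_cast hx1)
  have hRN : ⌊Real.sqrt x⌋₊ ≤ ⌊x⌋₊ := Nat.floor_mono hsxx
  -- abbreviations
  obtain ⟨P, hPdef⟩ : ∃ P : Finset ℕ,
      P = (Finset.Iic ⌊Real.sqrt x⌋₊).filter (fun p : ℕ => p.Prime ∧ y < (p : ℝ)) := ⟨_, rfl⟩
  obtain ⟨S, hSdef⟩ : ∃ S : Finset ℕ,
      S = (Finset.Icc 1 ⌊x⌋₊).filter (fun n => ∀ p : ℕ, p.Prime → p ∣ n → y < (p : ℝ)) :=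
    ⟨_, rfl⟩
  have hPhiS : Phi x y = S.card := by rw [hSdef]; rfl
  -- members of P
  have hPmem : ∀ p ∈ P, p.Prime ∧ y < (p : ℝ) ∧ (p : ℝ) ≤ Real.sqrt x := by
    intro p hp
    rw [hPdef, mem_filter, mem_Iic] at hp
    exact ⟨hp.2.1, hp.2.2, le_trans (Nat.cast_le.mpr hp.1) (Nat.floor_le hsq0)⟩
  -- rewrite index set of the goal sum
  have hidx : (Finset.Iic ⌊Real.sqrt x⌋₊).filter
      (fun p : ℕ => Nat.Prime p ∧ y < (p : ℝ) ∧ (p : ℝ) ≤ Real.sqrt x) = P := by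
    rw [hPdef]
    ext p
    simp only [mem_filter, mem_Iic]
    constructor
    · rintro ⟨ha, hb, hc, _⟩; exact ⟨ha, hb, hc⟩
    · rintro ⟨ha, hb, hc⟩
      exact ⟨ha, hb, hc, le_trans (Nat.cast_le.mpr ha) (Nat.floor_le hsq0)⟩
  -- Omega bound
  have hΩ : ∀ n ∈ S, n.primeFactorsList.length ≤ 2 := by
    intro n hn
    rw [hSdef, mem_filter, mem_Icc] at hn
    obtain ⟨⟨h1n, hnN⟩, hfac⟩ := hn
    by_contra hlen
    push_neg at hlen
    have hm : ∀ q ∈ n.primeFactorsList, ⌊y⌋₊ + 1 ≤ q := by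
      intro q hq
      have hq' := Nat.prime_of_mem_primeFactorsList hq
      have hy' := hfac q hq' (Nat.dvd_of_mem_primeFactorsList hq)
      have := (Nat.floor_lt hy0).mpr hy'
      omega
    have h3 : (⌊y⌋₊ + 1) ^ n.primeFactorsList.length ≤ n.primeFactorsList.prod :=
      List.pow_card_le_prod _ _ hm
    rw [Nat.prod_primeFactorsList (by omega)] at h3
    have hm3 : (⌊y⌋₊ + 1) ^ 3 ≤ (⌊y⌋₊ + 1) ^ n.primeFactorsList.length :=
      Nat.pow_le_pow_right (by omega) hlen
    have hcast : ((⌊y⌋₊ + 1 : ℕ) : ℝ) ^ 3 ≤ (n : ℝ) := by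
      exact_mod_cast le_trans hm3 h3
    have hym : y < ((⌊y⌋₊ + 1 : ℕ) : ℝ) := by push_cast; exact Nat.lt_floor_add_one y
    have hnx : (n : ℝ) ≤ x := le_trans (Nat.cast_le.mpr hnN) hNx
    have hy3 : y ^ 3 < ((⌊y⌋₊ + 1 : ℕ) : ℝ) ^ 3 :=
      pow_lt_pow_left₀ hym hy0 (by norm_num)
    linarith
  -- partition by Omega
  have hsplit : S.card
      = (S.filter (fun n => n.primeFactorsList.length = 0)).card
      + (S.filter (fun n => n.primeFactorsList.length = 1)).card
      + (S.filter (fun n => n.primeFactorsList.length = 2)).card := by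
    have e1 := Finset.card_filter_add_card_filter_not
      (s := S) (p := fun n : ℕ => n.primeFactorsList.length = 0)
    have e2 := Finset.card_filter_add_card_filter_not
      (s := S.filter (fun n : ℕ => ¬ n.primeFactorsList.length = 0))
      (p := fun n : ℕ => n.primeFactorsList.length = 1)
    rw [Finset.filter_filter, Finset.filter_filter] at e2
    have e3 : S.filter (fun n : ℕ => ¬ n.primeFactorsList.length = 0
          ∧ ¬ n.primeFactorsList.length = 1)
        = S.filter (fun n : ℕ => n.primeFactorsList.length = 2) := by
      apply Finset.filter_congr
      intro n hn
      have := hΩ n hn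
      constructor
      · rintro ⟨ha, hb⟩; omega
      · intro ha; omega
    have e4 : S.filter (fun n : ℕ => ¬ n.primeFactorsList.length = 0
          ∧ n.primeFactorsList.length = 1)
        = S.filter (fun n : ℕ => n.primeFactorsList.length = 1) := by
      apply Finset.filter_congr
      intro n hn
      constructor
      · rintro ⟨_, hb⟩; exact hb
      · intro ha; exact ⟨by omega, ha⟩
    rw [e3, e4] at e2
    omega
  -- the 1 term
  have hcard0 : (S.filter (fun n => n.primeFactorsList.length = 0)).card = 1 := by
    have hset : S.filter (fun n => n.primeFactorsList.length = 0) = {1} := by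
      ext n
      simp only [mem_filter, Finset.mem_singleton]
      constructor
      · rintro ⟨hn, h0⟩
        have hn' : 1 ≤ n := by
          rw [hSdef, mem_filter, mem_Icc] at hn; exact hn.1.1
        have := (Nat.primeFactorsList_eq_nil n).mp (List.length_eq_zero_iff.mp h0)
        omega
      · rintro rfl
        refine ⟨?_, by simp⟩
        rw [hSdef, mem_filter, mem_Icc]
        exact ⟨⟨le_refl 1, hN1⟩, fun p hp hdvd =>
          (hp.ne_one (Nat.dvd_one.mp hdvd)).elim⟩
    rw [hset, Finset.card_singleton]
  -- the primes term
  have hprimeset : S.filter (fun n => n.primeFactorsList.length = 1)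
      = (Finset.Iic ⌊x⌋₊).filter (fun p : ℕ => p.Prime ∧ y < (p : ℝ)) := by
    ext n
    rw [hSdef]
    simp only [mem_filter, mem_Icc, mem_Iic]
    constructor
    · rintro ⟨⟨⟨h1n, hnN⟩, hfac⟩, hl⟩
      have hp : n.Prime := prime_of_omega_one (by omega) hl
      exact ⟨hnN, hp, hfac n hp dvd_rfl⟩
    · rintro ⟨hnN, hp, hyp⟩
      refine ⟨⟨⟨hp.one_lt.le, hnN⟩, ?_⟩, by rw [Nat.primeFactorsList_prime hp]; rfl⟩
      intro q hq hdvd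
      have := (Nat.prime_dvd_prime_iff_eq hq hp).mp hdvd
      subst this
      exact hyp
  -- semiprimes: bijection with ordered pairs of primes
  obtain ⟨T, hTdef⟩ : ∃ T : Finset (ℕ × ℕ),
      T = ((Finset.Iic ⌊x⌋₊) ×ˢ (Finset.Iic ⌊x⌋₊)).filter
        (fun pq : ℕ × ℕ => pq.1.Prime ∧ pq.2.Prime ∧ y < (pq.1 : ℝ) ∧ pq.1 ≤ pq.2
          ∧ pq.1 * pq.2 ≤ ⌊x⌋₊) := ⟨_, rfl⟩
  have hcard2 : (S.filter (fun n => n.primeFactorsList.length = 2)).card = T.card := by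
    symm
    apply Finset.card_bij (fun (pq : ℕ × ℕ) _ => pq.1 * pq.2)
    · intro pq hpq
      rw [hTdef, mem_filter, Finset.mem_product, mem_Iic, mem_Iic] at hpq
      obtain ⟨⟨hp1, hp2⟩, hp, hq, hyp, hle, hmul⟩ := hpq
      rw [mem_filter, hSdef, mem_filter, mem_Icc]
      refine ⟨⟨⟨Nat.one_le_iff_ne_zero.mpr (Nat.mul_ne_zero hp.ne_zero hq.ne_zero), hmul⟩, ?_⟩,
        omega_two hp hq⟩
      intro r hr hdvd
      rcases (Nat.Prime.dvd_mul hr).mp hdvd with hd | hd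
      · rw [(Nat.prime_dvd_prime_iff_eq hr hp).mp hd]; exact hyp
      · rw [(Nat.prime_dvd_prime_iff_eq hr hq).mp hd]
        exact lt_of_lt_of_le hyp (Nat.cast_le.mpr hle)
    · intro a ha b hb hab
      rw [hTdef, mem_filter] at ha hb
      obtain ⟨_, hpa, hqa, _, hlea, _⟩ := ha
      obtain ⟨_, hpb, hqb, _, hleb, _⟩ := hb
      obtain ⟨e1, e2⟩ := mul_inj' hpa hqa hpb hqb hlea hleb hab
      exact Prod.ext e1 e2
    · intro n hn
      rw [mem_filter, hSdef, mem_filter, mem_Icc] at hn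
      obtain ⟨⟨⟨h1n, hnN⟩, hfac⟩, hl⟩ := hn
      obtain ⟨p, q, hpq⟩ := List.length_eq_two.mp hl
      have hsort := Nat.primeFactorsList_sorted n
      rw [hpq] at hsort
      have hple : p ≤ q := (List.pairwise_cons.mp hsort.pairwise).1 q (List.mem_singleton_self q)
      have hp : p.Prime := Nat.prime_of_mem_primeFactorsList (n := n) (by rw [hpq]; simp)
      have hq : q.Prime := Nat.prime_of_mem_primeFactorsList (n := n) (by rw [hpq]; simp)
      have hprod : p * q = n := by
        have hh := Nat.prod_primeFactorsList (show n ≠ 0 by omega)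
        rw [hpq] at hh
        simpa using hh
      have hyp : y < (p : ℝ) := hfac p hp (hprod ▸ dvd_mul_right p q)
      refine ⟨(p, q), ?_, hprod⟩
      rw [hTdef, mem_filter, Finset.mem_product, mem_Iic, mem_Iic]
      have hpN : p ≤ ⌊x⌋₊ := le_trans (Nat.le_of_dvd (by omega) ⟨q, hprod.symm⟩) hnN
      have hqN : q ≤ ⌊x⌋₊ :=
        le_trans (Nat.le_of_dvd (by omega) ⟨p, by rw [mul_comm]; exact hprod.symm⟩) hnN
      exact ⟨⟨hpN, hqN⟩, hp, hq, hyp, hple, by rw [hprod]; exact hnN⟩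
  -- count T fiberwise over P
  have hTsum : T.card = ∑ p ∈ P, ((Finset.Iic ⌊x / (p : ℝ)⌋₊).filter
      (fun q : ℕ => q.Prime ∧ (p : ℝ) - 1 < (q : ℝ))).card := by
    rw [hTdef, Finset.card_filter, Finset.sum_product]
    have hinner : ∀ p : ℕ, (∑ q ∈ Finset.Iic ⌊x⌋₊,
          if (p.Prime ∧ q.Prime ∧ y < (p : ℝ) ∧ p ≤ q ∧ p * q ≤ ⌊x⌋₊) then 1 else 0)
        = ((Finset.Iic ⌊x⌋₊).filter
            (fun q : ℕ => p.Prime ∧ q.Prime ∧ y < (p : ℝ) ∧ p ≤ q ∧ p * q ≤ ⌊x⌋₊)).card := by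
      intro p
      rw [Finset.card_filter]
    rw [Finset.sum_congr rfl (fun p _ => hinner p)]
    have hPsub : P ⊆ Finset.Iic ⌊x⌋₊ := by
      intro p hp
      rw [hPdef, mem_filter, mem_Iic] at hp
      rw [mem_Iic]
      omega
    rw [← Finset.sum_subset hPsub ?hvan]
    case hvan =>
      intro p hpN hpP
      rw [Finset.card_eq_zero, Finset.filter_eq_empty_iff]
      intro q hq
      rintro ⟨hp, hq', hyp, hle, hmul⟩
      apply hpP
      rw [hPdef, mem_filter, mem_Iic]
      refine ⟨?_, hp, hyp⟩
      by_contra hgt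
      push_neg at hgt
      have hsx : Real.sqrt x < p := Nat.lt_of_floor_lt hgt
      have hpp : p * p ≤ ⌊x⌋₊ := le_trans (Nat.mul_le_mul_left p hle) hmul
      have hppr : (p : ℝ) * p ≤ x := by
        have : ((p * p : ℕ) : ℝ) ≤ x := le_trans (Nat.cast_le.mpr hpp) hNx
        push_cast at this
        linarith
      nlinarith [hsqx, hsq0]
    apply Finset.sum_congr rfl
    intro p hp
    obtain ⟨hpp, hyp, hpsx⟩ := hPmem p hp
    have hp0 : (0 : ℝ) < p := by
      have := hpp.two_le
      have : (2 : ℝ) ≤ p := by exact_mod_cast this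
      linarith
    congr 1
    ext q
    simp only [mem_filter, mem_Iic]
    constructor
    · rintro ⟨hqN, _, hq', _, hle, hmul⟩
      refine ⟨Nat.le_floor ?_, hq', ?_⟩
      · rw [le_div_iff₀ hp0]
        calc (q : ℝ) * p = ((p * q : ℕ) : ℝ) := by push_cast; ring
        _ ≤ (⌊x⌋₊ : ℝ) := Nat.cast_le.mpr hmul
        _ ≤ x := hNx
      · have : (p : ℝ) ≤ q := Nat.cast_le.mpr hle
        linarith
    · rintro ⟨hqfl, hq', hlt⟩
      have hxp0 : (0 : ℝ) ≤ x / p := by positivity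
      have hqx : (q : ℝ) ≤ x / p :=
        le_trans (Nat.cast_le.mpr hqfl) (Nat.floor_le hxp0)
      have hle : p ≤ q := by
        have : (p : ℝ) < (q : ℝ) + 1 := by linarith
        exact_mod_cast Nat.lt_succ_iff.mp (by exact_mod_cast this)
      have hmulr : (p : ℝ) * q ≤ x := by
        rw [mul_comm, ← le_div_iff₀ hp0]
        exact hqx
      have hmn : p * q ≤ ⌊x⌋₊ := Nat.le_floor (by push_cast; linarith)
      have hqN : q ≤ ⌊x⌋₊ := le_trans (Nat.le_mul_of_pos_left q hpp.pos) hmn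
      exact ⟨hqN, hpp, hq', hyp, hle, hmn⟩
  -- count per-p via primePi
  have hc : ∀ p ∈ P, primePi (x / (p : ℝ)) = primePi ((p : ℝ) - 1)
      + ((Finset.Iic ⌊x / (p : ℝ)⌋₊).filter
          (fun q : ℕ => q.Prime ∧ (p : ℝ) - 1 < (q : ℝ))).card := by
    intro p hp
    obtain ⟨hpp, hyp, hpsx⟩ := hPmem p hp
    have hp2 : (2 : ℝ) ≤ p := by exact_mod_cast hpp.two_le
    apply primePi_split_s14
    · linarith
    · have hxp : Real.sqrt x ≤ x / p := by
        rw [le_div_iff₀ (by linarith)]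
        nlinarith [hsqx]
      linarith
  have hstep : ∀ p : ℕ, p.Prime → primePi (p : ℝ) = primePi ((p : ℝ) - 1) + 1 := by
    intro p hpp
    have h1p : 1 ≤ p := hpp.one_lt.le
    have e1 : ((p : ℝ) - 1) = ((p - 1 : ℕ) : ℝ) := by
      have : ((p - 1 : ℕ) : ℝ) = (p : ℝ) - 1 := by
        push_cast [h1p]
        ring
      linarith
    unfold primePi
    rw [e1, Nat.floor_natCast, Nat.floor_natCast]
    have hins : Finset.Iic p = insert p (Finset.Iic (p - 1)) := by
      ext q
      simp only [mem_Iic, Finset.mem_insert]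
      omega
    rw [hins, Finset.filter_insert, if_pos hpp,
      Finset.card_insert_of_notMem (by
        intro hmem
        rw [mem_filter, mem_Iic] at hmem
        omega)]
  have hπp : ∀ p ∈ P, primePi (p : ℝ) = primePi y + (P.filter (fun q => q ≤ p)).card := by
    intro p hp
    obtain ⟨hpp, hyp, hpsx⟩ := hPmem p hp
    have hsp := primePi_split_s14 y (p : ℝ) hy0 (le_of_lt hyp)
    rw [Nat.floor_natCast] at hsp
    rw [hsp]
    congr 1
    congr 1
    rw [hPdef]
    ext q
    simp only [mem_filter, mem_Iic]
    constructor
    · rintro ⟨hqp, hq, hyq⟩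
      have hpfl : p ≤ ⌊Real.sqrt x⌋₊ := by
        rw [hPdef, mem_filter, mem_Iic] at hp
        exact hp.1
      exact ⟨⟨by omega, hq, hyq⟩, hqp⟩
    · rintro ⟨⟨_, hq, hyq⟩, hqp⟩
      exact ⟨hqp, hq, hyq⟩
  have hsumπ : ∑ p ∈ P, primePi (p : ℝ)
      = primePi y * P.card + ∑ p ∈ P, (P.filter (fun q => q ≤ p)).card := by
    rw [Finset.sum_congr rfl hπp, Finset.sum_add_distrib, Finset.sum_const, smul_eq_mul,
      mul_comm]
  have hb := primePi_split_s14 y (Real.sqrt x) hy0 hysx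
  rw [← hPdef] at hb
  -- real-valued facts
  have f1 : (Phi x y : ℝ) = 1
      + (((Finset.Iic ⌊x⌋₊).filter (fun p : ℕ => p.Prime ∧ y < (p : ℝ))).card : ℝ)
      + ∑ p ∈ P, (((Finset.Iic ⌊x / (p : ℝ)⌋₊).filter
          (fun q : ℕ => q.Prime ∧ (p : ℝ) - 1 < (q : ℝ))).card : ℝ) := by
    rw [hPhiS, hsplit, hcard0, hprimeset, hcard2, hTsum]
    push_cast
    ring
  have f2 : (primePi x : ℝ) = (primePi y : ℝ)
      + (((Finset.Iic ⌊x⌋₊).filter (fun p : ℕ => p.Prime ∧ y < (p : ℝ))).card : ℝ) := by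
    exact_mod_cast primePi_split_s14 y x hy0 (by nlinarith)
  have hsum1 : ∑ p ∈ P, (((Finset.Iic ⌊x / (p : ℝ)⌋₊).filter
        (fun q : ℕ => q.Prime ∧ (p : ℝ) - 1 < (q : ℝ))).card : ℝ)
      = ∑ p ∈ P, ((primePi (x / (p : ℝ)) : ℝ) + 1 - (primePi ((p : ℝ)) : ℝ)) := by
    apply Finset.sum_congr rfl
    intro p hp
    have e1 : (primePi (x / (p : ℝ)) : ℝ) = (primePi ((p : ℝ) - 1) : ℝ)
        + (((Finset.Iic ⌊x / (p : ℝ)⌋₊).filter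
            (fun q : ℕ => q.Prime ∧ (p : ℝ) - 1 < (q : ℝ))).card : ℝ) := by
      exact_mod_cast hc p hp
    have e2 : (primePi ((p : ℝ)) : ℝ) = (primePi ((p : ℝ) - 1) : ℝ) + 1 := by
      exact_mod_cast hstep p (hPmem p hp).1
    linarith
  have f3 : ∑ p ∈ P, (((Finset.Iic ⌊x / (p : ℝ)⌋₊).filter
        (fun q : ℕ => q.Prime ∧ (p : ℝ) - 1 < (q : ℝ))).card : ℝ)
      = (∑ p ∈ P, (primePi (x / (p : ℝ)) : ℝ)) + (P.card : ℝ)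
        - ∑ p ∈ P, (primePi ((p : ℝ)) : ℝ) := by
    rw [hsum1, Finset.sum_sub_distrib, Finset.sum_add_distrib, Finset.sum_const,
      nsmul_eq_mul, mul_one]
  have f4 : ∑ p ∈ P, (primePi ((p : ℝ)) : ℝ)
      = (primePi y : ℝ) * (P.card : ℝ)
        + ((∑ p ∈ P, (P.filter (fun q => q ≤ p)).card : ℕ) : ℝ) := by
    exact_mod_cast hsumπ
  have f5 : 2 * ((∑ p ∈ P, (P.filter (fun q => q ≤ p)).card : ℕ) : ℝ)
      = (P.card : ℝ) * ((P.card : ℝ) + 1) := by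
    exact_mod_cast triangle P
  have f6 : (primePi (Real.sqrt x) : ℝ) = (primePi y : ℝ) + (P.card : ℝ) := by
    exact_mod_cast hb
  rw [hidx]
  linear_combination f1 - f2 + f3 - f4 - (1/2) * f5
    + (((primePi y : ℝ) + (primePi (Real.sqrt x) : ℝ) + (P.card : ℝ) - 1) / 2) * f6
end

section
/- Assume $\theta(t) \le t$ for all $t$ in $[q_0, q_1]$ and $q_0 - \theta(q_0^-) < 1.95\sqrt{q_0}$, where $q_0 < q_1$ are primes with $q_0 > 1000$. Then $\frac{-1}{\log q_0} + \frac{1}{\log q_1} + \sum_{q_0 \le p \le q_1} \frac{1}{p\log p} < \frac{1.95}{\sqrt{q_0}(\log q_0)^2}$. -/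
open Finset
open scoped Classical

/-- The Chebyshev theta function `θ x = ∑_{p ≤ x} log p`. -/
noncomputable def chebyTheta (x : ℝ) : ℝ :=
  ∑ p ∈ (Finset.Iic ⌊x⌋₊).filter Nat.Prime, Real.log p

/-- `θ(n⁻) = ∑_{p < n} log p`. -/
noncomputable def chebyThetaMinus (n : ℕ) : ℝ :=
  ∑ p ∈ (Finset.range n).filter Nat.Prime, Real.log p

private lemma chebyTheta_nat (n : ℕ) :
    chebyTheta (n : ℝ) = ∑ p ∈ Finset.range (n+1), if Nat.Prime p then Real.log p else 0 := by
  unfold chebyTheta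
  rw [Nat.floor_natCast, Finset.sum_filter]
  congr 1
  ext p
  simp [Nat.lt_succ_iff]

private lemma chebyTheta_succ (n : ℕ) :
    chebyTheta ((n+1 : ℕ) : ℝ)
      = chebyTheta (n : ℝ) + (if Nat.Prime (n+1) then Real.log (n+1) else 0) := by
  rw [chebyTheta_nat, chebyTheta_nat, Finset.sum_range_succ]
  push_cast
  ring_nf

private lemma chebyTheta_nonneg (n : ℕ) : 0 ≤ chebyTheta (n : ℝ) := by
  rw [chebyTheta_nat]
  refine Finset.sum_nonneg fun p _ => ?_
  split
  · exact Real.log_natCast_nonneg p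
  · exact le_refl 0

/-- key pointwise inequality -/
private lemma stepA (x : ℝ) (hx : 2 ≤ x) :
    1 / ((x+1) * Real.log (x+1) ^ 2) ≤ 1 / Real.log x - 1 / Real.log (x+1) := by
  have hx0 : (0:ℝ) < x := by linarith
  have ha : 0 < Real.log x := Real.log_pos (by linarith)
  have hab : Real.log x ≤ Real.log (x+1) := Real.log_le_log hx0 (by linarith)
  have hb : 0 < Real.log (x+1) := lt_of_lt_of_le ha hab
  have hdiff : 1/(x+1) ≤ Real.log (x+1) - Real.log x := by
    have h1 : Real.log (x/(x+1)) ≤ x/(x+1) - 1 :=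
      Real.log_le_sub_one_of_pos (by positivity)
    rw [Real.log_div (ne_of_gt hx0) (by linarith)] at h1
    have h2 : x/(x+1) - 1 = -(1/(x+1)) := by field_simp; ring
    rw [h2] at h1
    linarith
  have heq : 1 / Real.log x - 1 / Real.log (x+1)
      = (Real.log (x+1) - Real.log x) / (Real.log x * Real.log (x+1)) := by
    field_simp
  have h3 : 1 ≤ (Real.log (x+1) - Real.log x) * (x+1) := (div_le_iff₀ (by linarith)).mp hdiff
  rw [heq, div_le_div_iff₀ (by positivity) (by positivity)]
  nlinarith [mul_le_mul_of_nonneg_right h3 (sq_nonneg (Real.log (x+1))),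
    mul_le_mul_of_nonneg_right hab (le_of_lt hb)]

theorem eps3_bound (q0 q1 : ℕ) (hq0 : Nat.Prime q0) (hq1 : Nat.Prime q1)
    (hlt : q0 < q1) (hbig : 1000 < q0)
    (htheta : ∀ t : ℝ, (q0 : ℝ) ≤ t → t ≤ (q1 : ℝ) → chebyTheta t ≤ t)
    (hminus : (q0 : ℝ) - chebyThetaMinus q0 < 1.95 * Real.sqrt q0) :
    -1 / Real.log q0 + 1 / Real.log q1 +
        (∑ p ∈ (Finset.Icc q0 q1).filter Nat.Prime, 1 / ((p : ℝ) * Real.log p)) <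
      1.95 / (Real.sqrt q0 * (Real.log q0) ^ 2) := by
  -- notation
  set G : ℕ → ℝ := fun n => 1 / ((n : ℝ) * Real.log n ^ 2) with hG
  have hq0two : (2:ℝ) ≤ (q0:ℝ) := by exact_mod_cast hq0.two_le
  have hlq0 : 0 < Real.log q0 := Real.log_pos (by exact_mod_cast hq0.one_lt)
  have hlq1 : 0 < Real.log q1 := Real.log_pos (by exact_mod_cast hq1.one_lt)
  have hq0pos : (0:ℝ) < q0 := by linarith
  have hq1pos : (0:ℝ) < q1 := by exact_mod_cast hq1.pos
  -- monotonicity of G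
  have Gmono : ∀ n : ℕ, 2 ≤ n → G (n+1) ≤ G n := by
    intro n hn
    have hn2 : (2:ℝ) ≤ (n:ℝ) := by exact_mod_cast hn
    have hln : 0 < Real.log n := Real.log_pos (by linarith)
    have hln1 : Real.log n ≤ Real.log ((n:ℝ)+1) := Real.log_le_log (by linarith) (by linarith)
    have hden : (0:ℝ) < (n:ℝ) * Real.log n ^ 2 := by
      apply mul_pos (by linarith) (pow_pos hln 2)
    simp only [hG]
    apply one_div_le_one_div_of_le hden
    push_cast
    apply mul_le_mul (by linarith) (pow_le_pow_left₀ hln.le hln1 2) (by positivity) (by linarith)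
  -- sum recurrence
  have Ssucc : ∀ N : ℕ, q0 ≤ N →
      (∑ p ∈ (Finset.Icc q0 (N+1)).filter Nat.Prime, 1 / ((p : ℝ) * Real.log p))
        = (∑ p ∈ (Finset.Icc q0 N).filter Nat.Prime, 1 / ((p : ℝ) * Real.log p))
          + (if Nat.Prime (N+1) then 1 / (((N+1:ℕ) : ℝ) * Real.log ((N+1:ℕ):ℝ)) else 0) := by
    intro N hN
    rw [Finset.sum_filter, Finset.sum_filter, Finset.sum_Icc_succ_top (Nat.le_succ_of_le hN)]
  -- the key induction
  have key : ∀ N : ℕ, q0 ≤ N → N ≤ q1 →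
      (∑ p ∈ (Finset.Icc q0 N).filter Nat.Prime, 1 / ((p : ℝ) * Real.log p))
        + 1 / Real.log N + 1 / Real.log N ^ 2 - chebyTheta (N:ℝ) * G N
      ≤ 1 / Real.log q0 + 1 / Real.log q0 ^ 2 - chebyThetaMinus q0 * G q0 := by
    intro N hN
    induction N, hN using Nat.le_induction with
    | base =>
      intro _
      have hIcc : (∑ p ∈ (Finset.Icc q0 q0).filter Nat.Prime, 1 / ((p : ℝ) * Real.log p))
          = 1 / ((q0:ℝ) * Real.log q0) := by
        rw [Finset.Icc_self, Finset.sum_filter, Finset.sum_singleton, if_pos hq0]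
      have hth : chebyTheta (q0:ℝ) = chebyThetaMinus q0 + Real.log q0 := by
        rw [chebyTheta_nat, Finset.sum_range_succ, if_pos hq0]
        unfold chebyThetaMinus
        rw [Finset.sum_filter]
      have hlg : Real.log q0 * G q0 = 1 / ((q0:ℝ) * Real.log q0) := by
        simp only [hG]
        field_simp
      rw [hIcc, hth]
      nlinarith [hlg]
    | succ n hn ih =>
      intro h1
      have hn1 : n ≤ q1 := Nat.le_of_succ_le h1
      have ih' := ih hn1
      have hn2 : (2:ℝ) ≤ (n:ℝ) := by
        have : 2 ≤ n := le_trans hq0.two_le hn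
        exact_mod_cast this
      have hln : 0 < Real.log n := Real.log_pos (by linarith)
      have hln1 : 0 < Real.log ((n+1:ℕ):ℝ) := Real.log_pos (by push_cast; linarith)
      have hθle : chebyTheta (n:ℝ) ≤ (n:ℝ) := by
        apply htheta
        · exact_mod_cast hn
        · exact_mod_cast hn1
      have hθ0 : 0 ≤ chebyTheta (n:ℝ) := chebyTheta_nonneg n
      have hGm : G (n+1) ≤ G n := Gmono n (le_trans hq0.two_le hn)
      have hNG : (n:ℝ) * G n = 1 / Real.log n ^ 2 := by
        simp only [hG]; field_simp
      have hA1pos : (0:ℝ) < ((n+1:ℕ):ℝ) := by exact_mod_cast Nat.succ_pos n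
      have hpos1 : (0:ℝ) < ((n+1:ℕ):ℝ) * Real.log ((n+1:ℕ):ℝ) ^ 2 :=
        mul_pos hA1pos (pow_pos hln1 2)
      have hNG1 : ((n+1:ℕ):ℝ) * G (n+1) = 1 / Real.log ((n+1:ℕ):ℝ) ^ 2 := by
        simp only [hG]
        rw [mul_one_div, div_eq_div_iff hpos1.ne' (pow_pos hln1 2).ne']
        ring
      have hstep : G (n+1) ≤ 1 / Real.log ((n+1:ℕ):ℝ) - (1 / Real.log ((n+1:ℕ):ℝ) - (1 / Real.log n - 1 / Real.log ((n+1:ℕ):ℝ))) := by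
        have h := stepA (n:ℝ) hn2
        have hcast : ((n+1:ℕ):ℝ) = (n:ℝ) + 1 := by push_cast; ring
        simp only [hG, hcast]
        linarith [h]
      have hc1 : (if Nat.Prime (n+1) then 1 / (((n+1:ℕ):ℝ) * Real.log ((n+1:ℕ):ℝ)) else 0)
          = (if Nat.Prime (n+1) then Real.log ((n+1:ℕ):ℝ) else 0) * G (n+1) := by
        split
        · simp only [hG]
          rw [mul_one_div, div_eq_div_iff (mul_pos hA1pos hln1).ne' hpos1.ne']
          ring
        · simp
      have hA : chebyTheta (n:ℝ) * (G n - G (n+1)) ≤ (n:ℝ) * (G n - G (n+1)) :=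
        mul_le_mul_of_nonneg_right hθle (by linarith)
      have hB : (n:ℝ) * G (n+1) = ((n+1:ℕ):ℝ) * G (n+1) - G (n+1) := by
        push_cast; ring
      rw [Ssucc n hn, chebyTheta_succ n, hc1]
      have hcast : ((n+1:ℕ):ℝ) = (n:ℝ) + 1 := by push_cast; ring
      rw [hcast] at hNG1 hstep hB
      push_cast
      linarith [ih', hstep, hNG, hNG1, hB, hA]
  -- conclude
  have hkey := key q1 (le_of_lt hlt) le_rfl
  have hθq1 : chebyTheta (q1:ℝ) ≤ (q1:ℝ) := htheta _ (by exact_mod_cast le_of_lt hlt) le_rfl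
  have hGq1nn : 0 ≤ G q1 := by
    simp only [hG]; positivity
  have hθG1 : chebyTheta (q1:ℝ) * G q1 ≤ (q1:ℝ) * G q1 :=
    mul_le_mul_of_nonneg_right hθq1 hGq1nn
  have hq1G : (q1:ℝ) * G q1 = 1 / Real.log q1 ^ 2 := by
    simp only [hG]; field_simp
  have hGq0pos : 0 < G q0 := by
    simp only [hG]
    positivity
  have hq0G : (q0:ℝ) * G q0 = 1 / Real.log q0 ^ 2 := by
    simp only [hG]; field_simp
  have hsp : 0 < Real.sqrt q0 := Real.sqrt_pos.mpr hq0pos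
  have hs : Real.sqrt q0 * Real.sqrt q0 = (q0:ℝ) := Real.mul_self_sqrt hq0pos.le
  have hsqrtG : 1.95 * Real.sqrt q0 * G q0 = 1.95 / (Real.sqrt q0 * Real.log q0 ^ 2) := by
    simp only [hG]
    rw [eq_div_iff (by positivity)]
    field_simp
    nlinarith [hs]
  have h5 : (-chebyThetaMinus q0) * G q0 < (1.95 * Real.sqrt q0 - q0) * G q0 :=
    mul_lt_mul_of_pos_right (by linarith) hGq0pos
  have e1 : chebyTheta (q1:ℝ) * G q1 ≤ 1 / Real.log q1 ^ 2 := hq1G ▸ hθG1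
  have h6 : (1.95 * Real.sqrt q0 - (q0:ℝ)) * G q0
      = 1.95 / (Real.sqrt q0 * Real.log q0 ^ 2) - 1 / Real.log q0 ^ 2 := by
    rw [sub_mul, hsqrtG, hq0G]
  have e2 : -(chebyThetaMinus q0 * G q0)
      < 1.95 / (Real.sqrt q0 * Real.log q0 ^ 2) - 1 / Real.log q0 ^ 2 := by
    rw [← h6]
    have : -(chebyThetaMinus q0 * G q0) = -chebyThetaMinus q0 * G q0 := by ring
    rw [this]
    exact h5
  clear_value G
  show -1 / Real.log q0 + 1 / Real.log q1 +
        (∑ p ∈ (Finset.Icc q0 q1).filter Nat.Prime, 1 / ((p : ℝ) * Real.log p)) <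
      1.95 / (Real.sqrt q0 * Real.log q0 ^ 2)
  have t1 : (∑ p ∈ (Finset.Icc q0 q1).filter Nat.Prime, 1 / ((p : ℝ) * Real.log p))
      + 1 / Real.log q1 < 1 / Real.log q0 + 1.95 / (Real.sqrt q0 * Real.log q0 ^ 2) := by
    linarith [hkey, e1, e2]
  rw [neg_div]
  linarith [t1]
end
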